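/- Let b(r) = C(2r, r) / 4^r and P(n, r) = ((2r+1)(2n-2r-1)/n^2) * b(r)^2 * b(n-r-1) * b(2r+1) / (b(2r) * b(r+n)). Then for every positive integer n, the sum of P(n, r) over r = 0, 1, ..., n-1 equals 1. -/

import Mathlib

noncomputable def b (r : ℕ) : ℝ := (Nat.choose (2*r) r : ℝ) / 4^r

noncomputable def P (n r : ℕ) : ℝ :=
  ((2*(r:ℝ)+1) * (2*(n:ℝ) - 2*r - 1) / (n:ℝ)^2) * (b r)^2 * b (n-r-1) * b (2*r+1)
    / (b (2*r) * b (r+n))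

lemma b_pos (r : ℕ) : 0 < b r := by
  unfold b
  apply div_pos
  · exact_mod_cast Nat.choose_pos (by omega)
  · positivity

lemma b_ne (r : ℕ) : b r ≠ 0 := (b_pos r).ne'

lemma b_succ (r : ℕ) : (2*(r:ℝ)+2) * b (r+1) = (2*(r:ℝ)+1) * b r := by
  have h := Nat.succ_mul_centralBinom_succ r
  have h' : ((r:ℝ)+1) * (Nat.choose (2*(r+1)) (r+1) : ℝ) = 2 * (2*(r:ℝ)+1) * (Nat.choose (2*r) r : ℝ) := by
    have := congrArg (Nat.cast : ℕ → ℝ) h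
    push_cast [Nat.centralBinom] at this
    linarith [this]
  unfold b
  have h4 : (4:ℝ)^(r+1) = 4 * 4^r := by ring
  rw [h4]
  field_simp
  nlinarith [h', pow_pos (show (0:ℝ) < 4 by norm_num) r]

lemma b_zero : b 0 = 1 := by simp [b]

lemma b_one : b 1 = 1/2 := by norm_num [b]

/-- the summand, times n^2 -/
noncomputable def T (n r : ℕ) : ℝ :=
  (4*(r:ℝ)+1) * ((n:ℝ)-r) * (b r)^2 * b (n-r) / b (n+r)

/-- WZ certificate -/
noncomputable def G (n r : ℕ) : ℝ :=
  -((2*(n:ℝ)+1) * (2*(n:ℝ)-2*r+1) * (r:ℝ)^2 / (n:ℝ)^2) * (b r)^2 * b (n-r) / b (n+r)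

lemma key (n r : ℕ) (hr : r < n) :
    T (n+1) r = ((n:ℝ)+1)^2/(n:ℝ)^2 * T n r + (G n (r+1) - G n r) := by
  obtain ⟨m, rfl⟩ : ∃ m, n = r + m + 1 := ⟨n - r - 1, by omega⟩
  have e1 : r + m + 1 - r = m + 1 := by omega
  have e2 : r + m + 1 + 1 - r = m + 1 + 1 := by omega
  have e3 : r + m + 1 - (r + 1) = m := by omega
  have e4 : r + m + 1 + 1 + r = (r + m + 1 + r) + 1 := by omega
  have e5 : r + m + 1 + (r + 1) = (r + m + 1 + r) + 1 := by omega
  unfold T G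
  rw [e1, e2, e3, e4, e5]
  -- abbreviations
  set x := b r with hx
  set y := b (m+1) with hy
  set w := b (r+m+1+r) with hw
  have hbm : (2*(m:ℝ)+2) * b (m+1) = (2*(m:ℝ)+1) * b m := b_succ m
  have hby : (2*((m:ℝ)+1)+2) * b (m+1+1) = (2*((m:ℝ)+1)+1) * b (m+1) := by
    have := b_succ (m+1); push_cast at this ⊢; linarith
  have hbw : (2*((r:ℝ)+m+1+r)+2) * b (r+m+1+r+1) = (2*((r:ℝ)+m+1+r)+1) * w := by
    have := b_succ (r+m+1+r); push_cast at this ⊢; linarith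
  have hbx : (2*(r:ℝ)+2) * b (r+1) = (2*(r:ℝ)+1) * x := b_succ r
  -- solve for the shifted b's
  have hy2 : b (m+1+1) = (2*((m:ℝ)+1)+1) * y / (2*((m:ℝ)+1)+2) := by
    field_simp at hby ⊢; linarith
  have hw2 : b (r+m+1+r+1) = (2*((r:ℝ)+m+1+r)+1) * w / (2*((r:ℝ)+m+1+r)+2) := by
    field_simp at hbw ⊢; linarith
  have hx2 : b (r+1) = (2*(r:ℝ)+1) * x / (2*(r:ℝ)+2) := by
    field_simp at hbx ⊢; linarith
  have hm2 : b m = (2*(m:ℝ)+2) * y / (2*(m:ℝ)+1) := by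
    field_simp at hbm ⊢; linarith
  rw [hy2, hw2, hx2, hm2]
  have hxne : x ≠ 0 := b_ne r
  have hyne : y ≠ 0 := b_ne (m+1)
  have hwne : w ≠ 0 := b_ne (r+m+1+r)
  have hnne : ((r:ℝ) + m + 1) ≠ 0 := by positivity
  push_cast
  field_simp
  ring

lemma boundary (n : ℕ) (hn : 0 < n) : T (n+1) n = - G n n := by
  unfold T G
  have e1 : n + 1 - n = 1 := by omega
  have e2 : n - n = 0 := by omega
  have e3 : n + 1 + n = (n + n) + 1 := by omega
  rw [e1, e2, e3, b_zero, b_one]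
  have hb : (2*((n:ℝ)+n)+2) * b (n+n+1) = (2*((n:ℝ)+n)+1) * b (n+n) := by
    have := b_succ (n+n); push_cast at this ⊢; linarith
  have h1 : b (n+n+1) = (2*((n:ℝ)+n)+1) * b (n+n) / (2*((n:ℝ)+n)+2) := by
    field_simp at hb ⊢; linarith
  rw [h1]
  have hne : b (n+n) ≠ 0 := b_ne (n+n)
  have hnne : (n:ℝ) ≠ 0 := Nat.cast_ne_zero.mpr hn.ne'
  field_simp
  push_cast
  ring

lemma sumT (n : ℕ) (hn : 0 < n) : ∑ r ∈ Finset.range n, T n r = (n:ℝ)^2 := by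
  induction n with
  | zero => omega
  | succ n ih =>
    rcases Nat.eq_zero_or_pos n with h0 | hpos
    · subst h0
      simp [T, b_zero, b_one]
    · rw [Finset.sum_range_succ]
      have hstep : ∀ r ∈ Finset.range n, T (n+1) r
          = ((n:ℝ)+1)^2/(n:ℝ)^2 * T n r + (G n (r+1) - G n r) := by
        intro r hr
        exact key n r (Finset.mem_range.mp hr)
      rw [Finset.sum_congr rfl hstep, Finset.sum_add_distrib, ← Finset.mul_sum,
        ih hpos, Finset.sum_range_sub (fun r => G n r)]
      have hG0 : G n 0 = 0 := by simp [G]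
      have hb : T (n+1) n = - G n n := boundary n hpos
      have hnne : (n:ℝ) ≠ 0 := Nat.cast_ne_zero.mpr hpos.ne'
      rw [hG0, hb]
      field_simp
      push_cast
      ring

lemma P_eq (n r : ℕ) (hr : r < n) : P n r = T n r / (n:ℝ)^2 := by
  obtain ⟨m, rfl⟩ : ∃ m, n = r + m + 1 := ⟨n - r - 1, by omega⟩
  have e1 : r + m + 1 - r - 1 = m := by omega
  have e2 : r + m + 1 - r = m + 1 := by omega
  have e3 : r + (r + m + 1) = (r + m + 1) + r := by omega
  unfold P T
  rw [e1, e2, e3]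
  set x := b r with hx
  set y := b (m+1) with hy
  set w := b ((r+m+1)+r) with hw
  have hbm : (2*(m:ℝ)+2) * y = (2*(m:ℝ)+1) * b m := b_succ m
  have hm2 : b m = (2*(m:ℝ)+2) * y / (2*(m:ℝ)+1) := by
    field_simp at hbm ⊢; linarith
  have hb2r : (2*(2*(r:ℝ))+2) * b (2*r+1) = (2*(2*(r:ℝ))+1) * b (2*r) := by
    have := b_succ (2*r); push_cast at this ⊢; linarith
  have h2r : b (2*r+1) = (2*(2*(r:ℝ))+1) * b (2*r) / (2*(2*(r:ℝ))+2) := by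
    field_simp at hb2r ⊢; linarith
  rw [hm2, h2r]
  have hxne : x ≠ 0 := b_ne r
  have hyne : y ≠ 0 := b_ne (m+1)
  have hwne : w ≠ 0 := b_ne ((r+m+1)+r)
  have h2rne : b (2*r) ≠ 0 := b_ne (2*r)
  have hnne : ((r:ℝ) + m + 1) ≠ 0 := by positivity
  push_cast
  field_simp
  ring

theorem stmt_6 (n : ℕ) (hn : 0 < n) : ∑ r ∈ Finset.range n, P n r = 1 := by
  have h : ∀ r ∈ Finset.range n, P n r = T n r / (n:ℝ)^2 := fun r hr =>
    P_eq n r (Finset.mem_range.mp hr)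
  rw [Finset.sum_congr rfl h, ← Finset.sum_div, sumT n hn]
  have hnne : (n:ℝ) ≠ 0 := Nat.cast_ne_zero.mpr hn.ne'
  exact div_self (pow_ne_zero 2 hnne)
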